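/- arXiv:1706.04158 — 6 statements merged into one kernel-verified Lean document; each statement's English description precedes it below -/
import Mathlib

section
/- Let 0 < α_0 ≤ α < 1, let x ∈ (0, 1/2], and set y = x·(1 + (2x)^α). Then x^{−α_0} − y^{−α_0} ≥ α_0·2^{α_0}·(2x)^{α − α_0} − (α_0·(1+α_0)/2)·2^{α_0}·(2x)^{2α − α_0}. -/
/-!
Factor `x ^ (-α₀)` out of both sides and put `t = (2x)^α`: the estimate becomes the second-order
bound `(1 + t)^(-α₀) ≤ 1 - α₀ t + α₀ (1 + α₀) / 2 · t²` for `t ≥ 0`. Multiplied by `(1 + t)^α₀`,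
its right-hand side is a function of `t` equal to `1` at `t = 0` whose derivative is a nonnegative
multiple of `t²`.
-/

open Real Set

/-- The second-order Taylor polynomial of `t ↦ (1 + t) ^ (-a)` at `0`. -/
noncomputable def negRpowTaylor (a t : ℝ) : ℝ := 1 - a * t + a * (1 + a) / 2 * t ^ 2

theorem hasDerivAt_one_add_rpow_mul_negRpowTaylor {a s : ℝ} (hs : 0 < 1 + s) :
    HasDerivAt (fun u => (1 + u) ^ a * negRpowTaylor a u)
      (a * (1 + a) * (a + 2) / 2 * s ^ 2 * (1 + s) ^ (a - 1)) s := by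
  have hpow : HasDerivAt (fun u : ℝ => (1 + u) ^ a) (a * (1 + s) ^ (a - 1)) s := by
    simpa using ((hasDerivAt_id s).const_add 1).rpow_const (p := a) (Or.inl hs.ne')
  have hpoly : HasDerivAt (fun u => 1 - a * u + a * (1 + a) / 2 * u ^ 2)
      (-a + a * (1 + a) * s) s := by
    refine ((((hasDerivAt_id' s).const_mul a).const_sub 1).add
      ((hasDerivAt_pow 2 s).const_mul (a * (1 + a) / 2))).congr_deriv ?_
    norm_num
    ring
  refine (hpow.mul hpoly).congr_deriv ?_
  have hsplit : (1 + s) ^ a = (1 + s) ^ (a - 1) * (1 + s) := by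
    rw [← rpow_add_one hs.ne']; ring_nf
  rw [hsplit]
  ring

theorem one_le_one_add_rpow_mul_negRpowTaylor {a t : ℝ} (ha : 0 ≤ a) (ht : 0 ≤ t) :
    1 ≤ (1 + t) ^ a * negRpowTaylor a t := by
  have hderiv : ∀ s ∈ Ici (0 : ℝ), HasDerivAt (fun u => (1 + u) ^ a * negRpowTaylor a u)
      (a * (1 + a) * (a + 2) / 2 * s ^ 2 * (1 + s) ^ (a - 1)) s := fun s hs =>
    hasDerivAt_one_add_rpow_mul_negRpowTaylor (by linarith [mem_Ici.mp hs])
  have hmono : MonotoneOn (fun u => (1 + u) ^ a * negRpowTaylor a u) (Ici 0) := by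
    refine monotoneOn_of_hasDerivWithinAt_nonneg (convex_Ici 0)
      (fun s hs => (hderiv s hs).continuousAt.continuousWithinAt)
      (fun s hs => (hderiv s (interior_subset hs)).hasDerivWithinAt) fun s hs => ?_
    have : 0 ≤ (1 + s) ^ (a - 1) :=
      rpow_nonneg (by linarith [mem_Ici.mp (interior_subset hs)]) _
    positivity
  simpa [negRpowTaylor] using hmono self_mem_Ici ht ht

theorem one_add_rpow_neg_le_negRpowTaylor {a t : ℝ} (ha : 0 ≤ a) (ht : 0 ≤ t) :
    (1 + t) ^ (-a) ≤ negRpowTaylor a t := by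
  have hpos : 0 < (1 + t) ^ a := rpow_pos_of_pos (by linarith) a
  rw [rpow_neg (by linarith), inv_le_iff_one_le_mul₀' hpos]
  exact one_le_one_add_rpow_mul_negRpowTaylor ha ht

theorem two_rpow_mul_two_mul_rpow_sub {x : ℝ} (hx : 0 < x) (b c : ℝ) :
    2 ^ c * (2 * x) ^ (b - c) = x ^ (-c) * (2 * x) ^ b := by
  rw [rpow_sub (by positivity), rpow_neg hx.le, mul_rpow zero_le_two hx.le (z := c)]
  field_simp

theorem lsv_one_step_lower_general (α₀ α x : ℝ) (h0 : 0 < α₀)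
    (hx : x ∈ Set.Ioc (0 : ℝ) (1 / 2)) :
    α₀ * 2 ^ α₀ * (2 * x) ^ (α - α₀) - (α₀ * (1 + α₀) / 2) * 2 ^ α₀ * (2 * x) ^ (2 * α - α₀) ≤
      x ^ (-α₀) - (x * (1 + (2 * x) ^ α)) ^ (-α₀) := by
  have hx0 : 0 < x := hx.1
  set t := (2 * x) ^ α
  have ht : 0 ≤ t := by positivity
  have hsq : (2 * x) ^ (2 * α) = t ^ 2 := by
    rw [mul_comm 2 α, ← rpow_mul_natCast (by positivity)]
    norm_num
  have hlhs : α₀ * 2 ^ α₀ * (2 * x) ^ (α - α₀)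
      - (α₀ * (1 + α₀) / 2) * 2 ^ α₀ * (2 * x) ^ (2 * α - α₀)
      = x ^ (-α₀) * (1 - negRpowTaylor α₀ t) := by
    rw [mul_assoc α₀, mul_assoc _ (2 ^ α₀), two_rpow_mul_two_mul_rpow_sub hx0,
      two_rpow_mul_two_mul_rpow_sub hx0, hsq, negRpowTaylor]
    ring
  rw [hlhs, mul_rpow hx0.le (by positivity), ← mul_one_sub]
  gcongr
  exact one_add_rpow_neg_le_negRpowTaylor h0.le ht

/-- One-step lower estimate for the LSV left branch: for `0 < α₀ ≤ α < 1`, `x ∈ (0, 1/2]`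
and `y = x (1 + (2x)^α)`,
`x^(-α₀) - y^(-α₀) ≥ α₀ 2^α₀ (2x)^(α-α₀) - (α₀(1+α₀)/2) 2^α₀ (2x)^(2α-α₀)`. -/
theorem lsv_one_step_lower (α₀ α x : ℝ) (h0 : 0 < α₀) (h01 : α₀ ≤ α) (hα : α < 1)
    (hx : x ∈ Set.Ioc (0 : ℝ) (1 / 2)) :
    α₀ * 2 ^ α₀ * (2 * x) ^ (α - α₀) - (α₀ * (1 + α₀) / 2) * 2 ^ α₀ * (2 * x) ^ (2 * α - α₀) ≤
      x ^ (-α₀) - (x * (1 + (2 * x) ^ α)) ^ (-α₀) :=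
  lsv_one_step_lower_general α₀ α x h0 hx
end

section
/- Let 0 < α_0 ≤ α < 1, let x ∈ (0, 1/2], and set y = x·(1 + (2x)^α). Then x^{−α_0} − y^{−α_0} ≤ α_0·2^{α_0}·(2x)^{α − α_0}. -/
/-!
Writing `t = (2x)^α`, we have `y^(-α₀) = x^(-α₀) (1 + t)^(-α₀)`, and the Bernoulli-type bound
`(1 + t)^(-α₀) ≥ 1 - α₀ t` gives `x^(-α₀) - y^(-α₀) ≤ α₀ t x^(-α₀) = α₀ 2^α₀ (2x)^(α - α₀)`.
-/

open Real

theorem one_sub_mul_le_rpow_neg_one_add {t p : ℝ} (ht : -1 < t) (hp : 0 ≤ p) :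
    1 - p * t ≤ (1 + t) ^ (-p) := by
  have h1t : 0 < 1 + t := by linarith
  have hlog : p * log (1 + t) ≤ p * t :=
    mul_le_mul_of_nonneg_left (by linarith [log_le_sub_one_of_pos h1t]) hp
  calc 1 - p * t ≤ log (1 + t) * -p + 1 := by linarith
    _ ≤ exp (log (1 + t) * -p) := add_one_le_exp _
    _ = (1 + t) ^ (-p) := (rpow_def_of_pos h1t _).symm

theorem rpow_neg_mul_mul_rpow {c x : ℝ} (hc : 0 < c) (hx : 0 < x) (a b : ℝ) :
    x ^ (-a) * (c * x) ^ b = c ^ a * (c * x) ^ (b - a) := by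
  have hcx : 0 < c * x := mul_pos hc hx
  have hc1 : c ^ a * c ^ (-a) = 1 := by rw [← rpow_add hc]; simp
  rw [sub_eq_add_neg, rpow_add hcx, mul_rpow (z := -a) hc.le hx.le]
  linear_combination -(x ^ (-a) * (c * x) ^ b) * hc1

theorem lsv_one_step_upper_general (α₀ α x : ℝ) (h0 : 0 < α₀)
    (hx : x ∈ Set.Ioc (0 : ℝ) (1 / 2)) :
    x ^ (-α₀) - (x * (1 + (2 * x) ^ α)) ^ (-α₀) ≤ α₀ * 2 ^ α₀ * (2 * x) ^ (α - α₀) := by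
  have hx0 : 0 < x := hx.1
  have ht : 0 < (2 * x) ^ α := by positivity
  have hbern := one_sub_mul_le_rpow_neg_one_add (by linarith : -1 < (2 * x) ^ α) h0.le
  rw [mul_rpow hx0.le (by positivity)]
  calc x ^ (-α₀) - x ^ (-α₀) * (1 + (2 * x) ^ α) ^ (-α₀)
      = x ^ (-α₀) * (1 - (1 + (2 * x) ^ α) ^ (-α₀)) := by ring
    _ ≤ x ^ (-α₀) * (α₀ * (2 * x) ^ α) := by gcongr; linarith
    _ = α₀ * (x ^ (-α₀) * (2 * x) ^ α) := by ring
    _ = α₀ * 2 ^ α₀ * (2 * x) ^ (α - α₀) := by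
      rw [rpow_neg_mul_mul_rpow two_pos hx0]; ring

/-- One-step upper estimate for the LSV left branch: for `0 < α₀ ≤ α < 1`, `x ∈ (0, 1/2]`
and `y = x (1 + (2x)^α)`, `x^(-α₀) - y^(-α₀) ≤ α₀ 2^α₀ (2x)^(α-α₀)`. -/
theorem lsv_one_step_upper (α₀ α x : ℝ) (h0 : 0 < α₀) (h01 : α₀ ≤ α) (hα : α < 1)
    (hx : x ∈ Set.Ioc (0 : ℝ) (1 / 2)) :
    x ^ (-α₀) - (x * (1 + (2 * x) ^ α)) ^ (-α₀) ≤ α₀ * 2 ^ α₀ * (2 * x) ^ (α - α₀) :=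
  lsv_one_step_upper_general α₀ α x h0 hx
end

section
/- Let 0 < α_0 ≤ α_1 < 1, let (β_k)_{k≥2} be a sequence in [α_0, α_1], and let (y_k)_{k≥1} be a sequence with y_1 = 1/2, y_k ∈ (0, 1/2], and y_{k−1} = y_k·(1 + (2y_k)^{β_k}) for all k ≥ 2. Then for every ℓ ≥ 1, y_ℓ^{−α_0} ≥ 2^{α_0} + α_0·2^{α_0}·( ∑_{k=2}^ℓ (2y_k)^{β_k − α_0} − ((1+α_0)/2)·∑_{k=2}^ℓ (2y_k)^{2β_k − α_0} ). -/
/-!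
Writing `t = (2 y_k)^{β_k}`, the recursion gives `y_{k-1}^{-α} = y_k^{-α} (1 + t)^{-α}`, and the
second-order Taylor bound `(1 + t)^{-α} ≤ 1 - α t + α (α + 1) / 2 · t²` (whose remainder is
controlled by Bernoulli's inequality for the exponent `-(α + 1)`) turns this into
  `y_k^{-α} ≥ y_{k-1}^{-α} + α 2^α ((2 y_k)^{β_k - α} - (1+α)/2 · (2 y_k)^{2 β_k - α})`.

Summing from `k = 2` to `ℓ`, starting from `y_1^{-α} = 2^α`, gives the bound.
-/

open Real Set

theorem one_sub_mul_le_one_add_rpow_neg {q t : ℝ} (hq : 1 ≤ q) (ht : 0 ≤ t) :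
    1 - q * t ≤ (1 + t) ^ (-q) := by
  have h1t : 0 < 1 + t := by linarith
  -- Bernoulli's inequality for `q ≥ 1` at `s = (1 + t)⁻¹ - 1 ∈ [-1, 0]`
  have hs : -1 ≤ (1 + t)⁻¹ - 1 := by linarith [inv_pos.2 h1t]
  have hst : -t ≤ (1 + t)⁻¹ - 1 := by
    have : (1 + t)⁻¹ - 1 - -t = t ^ 2 / (1 + t) := by field_simp; ring
    linarith [div_nonneg (sq_nonneg t) h1t.le]
  calc 1 - q * t ≤ 1 + q * ((1 + t)⁻¹ - 1) := by nlinarith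
    _ ≤ (1 + ((1 + t)⁻¹ - 1)) ^ q := one_add_mul_self_le_rpow_one_add hs hq
    _ = (1 + t) ^ (-q) := by rw [add_sub_cancel, inv_rpow h1t.le, rpow_neg h1t.le]

theorem one_add_rpow_neg_le {a t : ℝ} (ha : 0 ≤ a) (ht : 0 ≤ t) :
    (1 + t) ^ (-a) ≤ 1 - a * t + a * (a + 1) / 2 * t ^ 2 := by
  set g : ℝ → ℝ := fun x ↦ 1 - a * x + a * (a + 1) / 2 * x ^ 2 - (1 + x) ^ (-a) with hg
  have hg' : ∀ x, 0 ≤ x →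
      HasDerivAt g (-a + a * (a + 1) * x + a * (1 + x) ^ (-(a + 1))) x := by
    intro x hx
    have hpow := ((hasDerivAt_id' x).const_add 1).rpow_const (p := -a) (Or.inl (by linarith))
    have hpoly := (((hasDerivAt_id' x).const_mul a).const_sub 1).add
      ((hasDerivAt_pow 2 x).const_mul (a * (a + 1) / 2))
    refine (hpoly.sub hpow).congr_deriv ?_
    rw [show -a - 1 = -(a + 1) by ring]
    push_cast
    ring
  have hmono : MonotoneOn g (Ici 0) := by
    refine monotoneOn_of_hasDerivWithinAt_nonneg (convex_Ici 0)
      (fun x hx ↦ (hg' x hx).continuousAt.continuousWithinAt)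
      (fun x hx ↦ (hg' x (interior_subset hx)).hasDerivWithinAt) fun x hx ↦ ?_
    have hx : 0 ≤ x := interior_subset hx
    nlinarith [one_sub_mul_le_one_add_rpow_neg (q := a + 1) (by linarith) hx]
  have := hmono self_mem_Ici ht ht
  simp only [hg] at this
  norm_num at this
  linarith

theorem two_rpow_mul_two_mul_rpow_sub_s10 {u : ℝ} (hu : 0 < u) (c α : ℝ) :
    2 ^ α * (2 * u) ^ (c - α) = (2 * u) ^ c * u ^ (-α) := by
  rw [sub_eq_add_neg, rpow_add (by positivity), mul_rpow (z := -α) zero_le_two hu.le,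
    rpow_neg zero_le_two]
  field_simp

theorem lsv_preimage_rpow_neg_step {α u : ℝ} (hα : 0 ≤ α) (hu : 0 < u) (b : ℝ) :
    (u * (1 + (2 * u) ^ b)) ^ (-α) +
      α * 2 ^ α * ((2 * u) ^ (b - α) - (1 + α) / 2 * (2 * u) ^ (2 * b - α)) ≤ u ^ (-α) := by
  set t := (2 * u) ^ b
  have ht : 0 ≤ t := by positivity
  have hsq : (2 * u) ^ (2 * b) = t ^ 2 := by
    rw [mul_comm 2 b, rpow_mul (by positivity)]
    norm_cast
  have e1 := two_rpow_mul_two_mul_rpow_sub_s10 hu b α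
  have e2 := two_rpow_mul_two_mul_rpow_sub_s10 hu (2 * b) α
  rw [hsq] at e2
  calc (u * (1 + t)) ^ (-α) +
        α * 2 ^ α * ((2 * u) ^ (b - α) - (1 + α) / 2 * (2 * u) ^ (2 * b - α))
      = u ^ (-α) * ((1 + t) ^ (-α) + α * t - α * (α + 1) / 2 * t ^ 2) := by
        rw [mul_rpow hu.le (by positivity)]
        linear_combination α * e1 - α * (1 + α) / 2 * e2
    _ ≤ u ^ (-α) * 1 := by
        gcongr
        linarith [one_add_rpow_neg_le hα ht]
    _ = u ^ (-α) := mul_one _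

theorem lsv_preimage_iterated_lower_general (α₀ : ℝ) (h0 : 0 < α₀)
    (β : ℕ → ℝ)
    (y : ℕ → ℝ) (hy1 : y 1 = 1 / 2)
    (hy : ∀ k, 1 ≤ k → y k ∈ Set.Ioc (0 : ℝ) (1 / 2))
    (hrec : ∀ k, 2 ≤ k → y (k - 1) = y k * (1 + (2 * y k) ^ β k)) :
    ∀ ℓ, 1 ≤ ℓ →
      (2 : ℝ) ^ α₀ + α₀ * 2 ^ α₀ *
          ((∑ k ∈ Finset.Icc 2 ℓ, (2 * y k) ^ (β k - α₀)) -
            ((1 + α₀) / 2) * ∑ k ∈ Finset.Icc 2 ℓ, (2 * y k) ^ (2 * β k - α₀)) ≤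
        (y ℓ) ^ (-α₀) := by
  intro ℓ hℓ
  induction ℓ, hℓ using Nat.le_induction with
  | base => simp [hy1, inv_rpow, rpow_neg]
  | succ n _ ih =>
    rw [Finset.sum_Icc_succ_top (by omega), Finset.sum_Icc_succ_top (by omega)]
    have hstep := lsv_preimage_rpow_neg_step h0.le (hy (n + 1) (by omega)).1 (β (n + 1))
    rw [← hrec (n + 1) (by omega), Nat.add_sub_cancel] at hstep
    linarith

/-- Iterated lower estimate along a backward-preimage sequence of the LSV family:
if `y 1 = 1/2`, `y k ∈ (0, 1/2]`, `y (k-1) = y k (1 + (2 y k)^(β k))` for `k ≥ 2`,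
with parameters `β k ∈ [α₀, α₁] ⊂ (0,1)`, then for every `ℓ ≥ 1`,
`(y ℓ)^(-α₀) ≥ 2^α₀ + α₀ 2^α₀ (∑_{k=2}^ℓ (2 y k)^(β k - α₀)
  - ((1+α₀)/2) ∑_{k=2}^ℓ (2 y k)^(2 β k - α₀))`. -/
theorem lsv_preimage_iterated_lower (α₀ α₁ : ℝ) (h0 : 0 < α₀) (h01 : α₀ ≤ α₁) (h1 : α₁ < 1)
    (β : ℕ → ℝ) (hβ : ∀ k, 2 ≤ k → β k ∈ Set.Icc α₀ α₁)
    (y : ℕ → ℝ) (hy1 : y 1 = 1 / 2)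
    (hy : ∀ k, 1 ≤ k → y k ∈ Set.Ioc (0 : ℝ) (1 / 2))
    (hrec : ∀ k, 2 ≤ k → y (k - 1) = y k * (1 + (2 * y k) ^ β k)) :
    ∀ ℓ, 1 ≤ ℓ →
      (2 : ℝ) ^ α₀ + α₀ * 2 ^ α₀ *
          ((∑ k ∈ Finset.Icc 2 ℓ, (2 * y k) ^ (β k - α₀)) -
            ((1 + α₀) / 2) * ∑ k ∈ Finset.Icc 2 ℓ, (2 * y k) ^ (2 * β k - α₀)) ≤
        (y ℓ) ^ (-α₀) :=
  lsv_preimage_iterated_lower_general α₀ h0 β y hy1 hy hrec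
end

section
/- Let 0 < α_0 ≤ α_1 < 1, let (β_k)_{k≥2} be a sequence in [α_0, α_1], and let (y_k)_{k≥1} be a sequence with y_1 = 1/2, y_k ∈ (0, 1/2], and y_{k−1} = y_k·(1 + (2y_k)^{β_k}) for all k ≥ 2. Then for every ℓ ≥ 1, y_ℓ^{−α_0} ≤ 2^{α_0} + α_0·2^{α_0}·∑_{k=2}^ℓ (2y_k)^{β_k − α_0}. -/
/-! Writing `y_{k-1} = y_k (1 + ε_k)` with `ε_k = (2 y_k)^{β_k}`, Bernoulli's inequality
`(1 + ε)^α ≤ 1 + α ε` for `α ∈ [0, 1]` gives the one-step bound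
`y_k^{-α₀} ≤ y_{k-1}^{-α₀} + α₀ 2^{α₀} (2 y_k)^{β_k - α₀}`, and these bounds telescope
down to `y_1^{-α₀} = 2^{α₀}`. -/

open Finset

lemma rpow_neg_le_rpow_neg_mul_one_add {x ε a : ℝ} (hx : 0 < x) (hε : 0 ≤ ε)
    (ha₀ : 0 ≤ a) (ha₁ : a ≤ 1) :
    x ^ (-a) ≤ (x * (1 + ε)) ^ (-a) + a * ε * x ^ (-a) := by
  have h1ε : 0 < 1 + ε := by linarith
  have hmono : (x * (1 + ε)) ^ (-a) ≤ x ^ (-a) :=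
    Real.rpow_le_rpow_of_nonpos hx (by nlinarith) (by linarith)
  calc x ^ (-a) = (x * (1 + ε)) ^ (-a) * (1 + ε) ^ a := by
        rw [Real.mul_rpow hx.le h1ε.le, Real.rpow_neg h1ε.le]
        field_simp
    _ ≤ (x * (1 + ε)) ^ (-a) * (1 + a * ε) := by
        gcongr
        exact rpow_one_add_le_one_add_mul_self (by linarith) ha₀ ha₁
    _ = (x * (1 + ε)) ^ (-a) + a * ε * (x * (1 + ε)) ^ (-a) := by ring
    _ ≤ (x * (1 + ε)) ^ (-a) + a * ε * x ^ (-a) := by gcongr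

lemma rpow_neg_le_lsv_preimage {y β a : ℝ} (hy : 0 < y) (ha₀ : 0 ≤ a) (ha₁ : a ≤ 1) :
    y ^ (-a) ≤ (y * (1 + (2 * y) ^ β)) ^ (-a) + a * 2 ^ a * (2 * y) ^ (β - a) := by
  have h2y : 0 < 2 * y := by positivity
  have hscale : (2 * y) ^ β * y ^ (-a) = 2 ^ a * (2 * y) ^ (β - a) := by
    simp only [Real.rpow_sub h2y, Real.mul_rpow zero_le_two hy.le, Real.rpow_neg hy.le]
    field_simp
  calc y ^ (-a) ≤ (y * (1 + (2 * y) ^ β)) ^ (-a) + a * ((2 * y) ^ β * y ^ (-a)) := by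
        simpa only [mul_assoc] using
          rpow_neg_le_rpow_neg_mul_one_add hy (Real.rpow_nonneg h2y.le β) ha₀ ha₁
    _ = _ := by rw [hscale]; ring

lemma le_add_sum_Icc_of_le_sub_one_add {M : Type*} [AddCommMonoid M] [PartialOrder M]
    [IsOrderedAddMonoid M] {u d : ℕ → M} (h : ∀ k, 2 ≤ k → u k ≤ u (k - 1) + d k)
    {ℓ : ℕ} (hℓ : 1 ≤ ℓ) : u ℓ ≤ u 1 + ∑ k ∈ Icc 2 ℓ, d k := by
  induction ℓ, hℓ using Nat.le_induction with
  | base => simp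
  | succ n _ ih =>
    rw [sum_Icc_succ_top (by omega : 2 ≤ n + 1), ← add_assoc]
    calc u (n + 1) ≤ u n + d (n + 1) := h (n + 1) (by omega)
      _ ≤ _ := add_le_add_left ih _

theorem lsv_preimage_iterated_upper_general (α₀ α₁ : ℝ) (h0 : 0 < α₀) (h01 : α₀ ≤ α₁) (h1 : α₁ < 1)
    (β : ℕ → ℝ)
    (y : ℕ → ℝ) (hy1 : y 1 = 1 / 2)
    (hy : ∀ k, 1 ≤ k → y k ∈ Set.Ioc (0 : ℝ) (1 / 2))
    (hrec : ∀ k, 2 ≤ k → y (k - 1) = y k * (1 + (2 * y k) ^ β k)) :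
    ∀ ℓ, 1 ≤ ℓ →
      (y ℓ) ^ (-α₀) ≤
        (2 : ℝ) ^ α₀ + α₀ * 2 ^ α₀ * ∑ k ∈ Finset.Icc 2 ℓ, (2 * y k) ^ (β k - α₀) := by
  intro ℓ hℓ
  have hstep : ∀ k, 2 ≤ k →
      y k ^ (-α₀) ≤ y (k - 1) ^ (-α₀) + α₀ * 2 ^ α₀ * (2 * y k) ^ (β k - α₀) := by
    intro k hk
    rw [hrec k hk]
    exact rpow_neg_le_lsv_preimage (hy k (by omega)).1 h0.le (by linarith)
  have hy1' : y 1 ^ (-α₀) = 2 ^ α₀ := by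
    rw [hy1, one_div, Real.inv_rpow zero_le_two, Real.rpow_neg zero_le_two, inv_inv]
  calc y ℓ ^ (-α₀) ≤ y 1 ^ (-α₀) + ∑ k ∈ Icc 2 ℓ, α₀ * 2 ^ α₀ * (2 * y k) ^ (β k - α₀) :=
        le_add_sum_Icc_of_le_sub_one_add hstep hℓ
    _ = _ := by rw [hy1', mul_sum]

/-- Iterated upper estimate along a backward-preimage sequence of the LSV family:
if `y 1 = 1/2`, `y k ∈ (0, 1/2]`, `y (k-1) = y k (1 + (2 y k)^(β k))` for `k ≥ 2`,
with parameters `β k ∈ [α₀, α₁] ⊂ (0,1)`, then for every `ℓ ≥ 1`,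
`(y ℓ)^(-α₀) ≤ 2^α₀ + α₀ 2^α₀ ∑_{k=2}^ℓ (2 y k)^(β k - α₀)`. -/
theorem lsv_preimage_iterated_upper (α₀ α₁ : ℝ) (h0 : 0 < α₀) (h01 : α₀ ≤ α₁) (h1 : α₁ < 1)
    (β : ℕ → ℝ) (hβ : ∀ k, 2 ≤ k → β k ∈ Set.Icc α₀ α₁)
    (y : ℕ → ℝ) (hy1 : y 1 = 1 / 2)
    (hy : ∀ k, 1 ≤ k → y k ∈ Set.Ioc (0 : ℝ) (1 / 2))
    (hrec : ∀ k, 2 ≤ k → y (k - 1) = y k * (1 + (2 * y k) ^ β k)) :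
    ∀ ℓ, 1 ≤ ℓ →
      (y ℓ) ^ (-α₀) ≤
        (2 : ℝ) ^ α₀ + α₀ * 2 ^ α₀ * ∑ k ∈ Finset.Icc 2 ℓ, (2 * y k) ^ (β k - α₀) :=
  lsv_preimage_iterated_upper_general α₀ α₁ h0 h01 h1 β y hy1 hy hrec
end

section
/- Let 0 < α_0 ≤ α_1 < 1 and let (β_k)_{k≥2} be any sequence in [α_0, α_1]. Let (y_k) be the backward-preimage sequence associated to (β_k), and let (y_k^{(0)}) and (y_k^{(1)}) be the backward-preimage sequences associated to the constant sequences β_k ≡ α_0 and β_k ≡ α_1 respectively. Then for every ℓ ≥ 1, y_ℓ^{(0)} ≤ y_ℓ ≤ y_ℓ^{(1)}. -/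
/-!
Smaller exponents give smaller preimages. The left branch `x ↦ x (1 + (2x)^β)` is strictly
increasing in `x` and, on `(0, 1/2]` where `2x ≤ 1`, decreasing in `β`. So if `y ℓ < y₀ ℓ`,
applying the branches would give `y (ℓ-1) = f_{β ℓ}(y ℓ) ≤ f_{α₀}(y ℓ) < f_{α₀}(y₀ ℓ) = y₀ (ℓ-1)`,
and induction on `ℓ` from `y 1 = y₀ 1 = 1/2` rules this out; the upper bound is symmetric.
-/

/-- The left branch of the LSV map `f_β` on `[0, 1/2]`. -/
noncomputable def lsvBranch (β x : ℝ) : ℝ := x * (1 + (2 * x) ^ β)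

lemma lsvBranch_strictMonoOn {β : ℝ} (hβ : 0 < β) : StrictMonoOn (lsvBranch β) (Set.Ici 0) := by
  intro a ha b _ hab
  have ha : (0 : ℝ) ≤ a := ha
  have hpow : (2 * a) ^ β < (2 * b) ^ β := Real.rpow_lt_rpow (by positivity) (by linarith) hβ
  have hpos : 0 ≤ (2 * a) ^ β := by positivity
  unfold lsvBranch
  nlinarith

lemma lsvBranch_le_of_exponent_le {β γ x : ℝ} (hx : 0 < x) (hx' : x ≤ 1 / 2) (h : β ≤ γ) :
    lsvBranch γ x ≤ lsvBranch β x := by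
  have hpow : (2 * x) ^ γ ≤ (2 * x) ^ β :=
    Real.rpow_le_rpow_of_exponent_ge (by positivity) (by linarith) h
  unfold lsvBranch
  gcongr

lemma le_of_lsvBranch_le {β γ a b : ℝ} (hγ : 0 < γ) (hγβ : γ ≤ β) (ha : 0 < a) (hb : b ≤ 1 / 2)
    (h : lsvBranch γ b ≤ lsvBranch β a) : b ≤ a := by
  by_contra! hab
  have := calc
    lsvBranch β a ≤ lsvBranch γ a := lsvBranch_le_of_exponent_le ha (by linarith) hγβ
    _ < lsvBranch γ b := lsvBranch_strictMonoOn hγ ha.le (by simp only [Set.mem_Ici]; linarith) hab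
  linarith

theorem backwardPreimage_le_of_exponent_le {β γ u v : ℕ → ℝ}
    (hγ : ∀ k, 2 ≤ k → 0 < γ k) (hγβ : ∀ k, 2 ≤ k → γ k ≤ β k)
    (hu : ∀ k, 1 ≤ k → 0 < u k) (hv : ∀ k, 1 ≤ k → v k ≤ 1 / 2) (h1 : v 1 ≤ u 1)
    (hrecu : ∀ k, 2 ≤ k → u (k - 1) = lsvBranch (β k) (u k))
    (hrecv : ∀ k, 2 ≤ k → v (k - 1) = lsvBranch (γ k) (v k)) :
    ∀ ℓ, 1 ≤ ℓ → v ℓ ≤ u ℓ := by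
  intro ℓ hℓ
  induction ℓ, hℓ using Nat.le_induction with
  | base => exact h1
  | succ n hn ih =>
    have h2 : 2 ≤ n + 1 := by omega
    have hprev := hrecv (n + 1) h2 ▸ hrecu (n + 1) h2 ▸ ih
    exact le_of_lsvBranch_le (hγ _ h2) (hγβ _ h2) (hu _ (by omega)) (hv _ (by omega)) hprev

theorem lsv_preimage_comparison_general (α₀ α₁ : ℝ) (h0 : 0 < α₀)
    (β : ℕ → ℝ) (hβ : ∀ k, 2 ≤ k → β k ∈ Set.Icc α₀ α₁)
    (y y₀ y₁ : ℕ → ℝ)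
    (hy1 : y 1 = 1 / 2) (hy : ∀ k, 1 ≤ k → y k ∈ Set.Ioc (0 : ℝ) (1 / 2))
    (hrec : ∀ k, 2 ≤ k → y (k - 1) = y k * (1 + (2 * y k) ^ β k))
    (hy01 : y₀ 1 = 1 / 2) (hy0 : ∀ k, 1 ≤ k → y₀ k ∈ Set.Ioc (0 : ℝ) (1 / 2))
    (hrec0 : ∀ k, 2 ≤ k → y₀ (k - 1) = y₀ k * (1 + (2 * y₀ k) ^ α₀))
    (hy11 : y₁ 1 = 1 / 2) (hy1' : ∀ k, 1 ≤ k → y₁ k ∈ Set.Ioc (0 : ℝ) (1 / 2))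
    (hrec1 : ∀ k, 2 ≤ k → y₁ (k - 1) = y₁ k * (1 + (2 * y₁ k) ^ α₁)) :
    ∀ ℓ, 1 ≤ ℓ → y₀ ℓ ≤ y ℓ ∧ y ℓ ≤ y₁ ℓ := by
  intro ℓ hℓ
  constructor
  · exact backwardPreimage_le_of_exponent_le (γ := fun _ ↦ α₀) (fun _ _ ↦ h0)
      (fun k hk ↦ (hβ k hk).1) (fun k hk ↦ (hy k hk).1) (fun k hk ↦ (hy0 k hk).2)
      (by rw [hy1, hy01]) hrec hrec0 ℓ hℓ
  · exact backwardPreimage_le_of_exponent_le (β := fun _ ↦ α₁)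
      (fun k hk ↦ h0.trans_le (hβ k hk).1) (fun k hk ↦ (hβ k hk).2) (fun k hk ↦ (hy1' k hk).1)
      (fun k hk ↦ (hy k hk).2) (by rw [hy1, hy11]) hrec1 hrec ℓ hℓ

/-- Monotone comparison of backward-preimage sequences of the LSV family: for any
parameter sequence `β k ∈ [α₀, α₁] ⊂ (0,1)`, the associated backward-preimage sequence
`y` is squeezed between the ones `y₀`, `y₁` associated to the constant parameters
`α₀` and `α₁`: `y₀ ℓ ≤ y ℓ ≤ y₁ ℓ` for all `ℓ ≥ 1`. -/
theorem lsv_preimage_comparison (α₀ α₁ : ℝ) (h0 : 0 < α₀) (h01 : α₀ ≤ α₁) (h1 : α₁ < 1)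
    (β : ℕ → ℝ) (hβ : ∀ k, 2 ≤ k → β k ∈ Set.Icc α₀ α₁)
    (y y₀ y₁ : ℕ → ℝ)
    (hy1 : y 1 = 1 / 2) (hy : ∀ k, 1 ≤ k → y k ∈ Set.Ioc (0 : ℝ) (1 / 2))
    (hrec : ∀ k, 2 ≤ k → y (k - 1) = y k * (1 + (2 * y k) ^ β k))
    (hy01 : y₀ 1 = 1 / 2) (hy0 : ∀ k, 1 ≤ k → y₀ k ∈ Set.Ioc (0 : ℝ) (1 / 2))
    (hrec0 : ∀ k, 2 ≤ k → y₀ (k - 1) = y₀ k * (1 + (2 * y₀ k) ^ α₀))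
    (hy11 : y₁ 1 = 1 / 2) (hy1' : ∀ k, 1 ≤ k → y₁ k ∈ Set.Ioc (0 : ℝ) (1 / 2))
    (hrec1 : ∀ k, 2 ≤ k → y₁ (k - 1) = y₁ k * (1 + (2 * y₁ k) ^ α₁)) :
    ∀ ℓ, 1 ≤ ℓ → y₀ ℓ ≤ y ℓ ∧ y ℓ ≤ y₁ ℓ :=
  lsv_preimage_comparison_general α₀ α₁ h0 β hβ y y₀ y₁ hy1 hy hrec hy01 hy0 hrec0 hy11 hy1' hrec1
end

section
/- Let 0 < α_0 < α_1 < 1 and let (c_k)_{k≥2} and (c'_k)_{k≥2} be sequences of positive reals converging to positive limits. Define, for k ≥ 2, E_k = (1/(α_1−α_0))·∫_{α_0}^{α_1} [ α_0·2^{α_0}·(2c_k·k^{−1/α_0})^{t − α_0} − ((1+α_0)/2)·α_0·2^{α_0}·(2c'_k·k^{−1/α_1})^{2t − α_0} ] dt. Then ((log ℓ)/ℓ)·∑_{k=2}^ℓ E_k → α_0²·2^{α_0}/(α_1 − α_0) as ℓ → ∞. -/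
/-!
With `u_k = 2 c_k k^(-1/α₀)`, `v_k = 2 c'_k k^(-1/α₁)`, `A = α₀ 2^α₀` and `B = (1 + α₀) A / 2`,
the integral defining `E k` is elementary:
`(α₁ - α₀) E k = A (u_k^(α₁-α₀) - 1) / log u_k - B (v_k^(2α₁-α₀) - v_k^α₀) / (2 log v_k)`.
As `u_k, v_k → 0` while `log k / log u_k → -α₀` and `log k / log v_k → -α₁`, only the constant
term survives after multiplying by `log k`: `log k · E k → α₀² 2^α₀ / (α₁ - α₀)`.

It remains to see that `log k · a_k → C` implies `(log ℓ / ℓ) ∑_{k ≤ ℓ} a_k → C`. By Stolz–Cesàro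
with the divergent weights `1 / log k`, `∑ a_k ∼ C ∑ 1 / log k`, and by Stolz–Cesàro once more,
against the telescoping increments of `k / log k`, `∑_{k < n} 1 / log k ∼ n / log n`.
-/

open Filter Topology Asymptotics Finset Real

theorem tendsto_sum_range_div_sum_range {a g : ℕ → ℝ} {C : ℝ} (hg : 0 ≤ g)
    (hsum : Tendsto (fun n ↦ ∑ i ∈ range n, g i) atTop atTop)
    (ha : (fun k ↦ a k - C * g k) =o[atTop] g) :
    Tendsto (fun n ↦ (∑ i ∈ range n, a i) / ∑ i ∈ range n, g i) atTop (𝓝 C) := by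
  have h := ((ha.sum_range hg hsum).tendsto_div_nhds_zero).const_add C
  rw [add_zero] at h
  refine h.congr' ?_
  filter_upwards [hsum.eventually_gt_atTop 0] with n hn
  rw [sum_sub_distrib, ← mul_sum]
  field_simp
  ring

theorem isLittleO_sub_mul_inv_log {a : ℕ → ℝ} {C : ℝ}
    (ha : Tendsto (fun k : ℕ ↦ log k * a k) atTop (𝓝 C)) :
    (fun k : ℕ ↦ a k - C * (log k)⁻¹) =o[atTop] fun k ↦ (log k)⁻¹ := by
  have h := ((isLittleO_one_iff ℝ).2 (tendsto_sub_nhds_zero_iff.2 ha)).mul_isBigO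
    (isBigO_refl (fun k : ℕ ↦ (log k)⁻¹) atTop)
  refine h.congr' ?_ (by simp)
  filter_upwards [eventually_ge_atTop 2] with k hk
  have : log k ≠ 0 := (log_pos (by exact_mod_cast hk)).ne'
  field_simp

-- Since `log 0 = log 1 = 0`, the weights `(log k)⁻¹` are `0` (not infinite) for `k ≤ 1`.
theorem tendsto_sum_range_inv_log_atTop :
    Tendsto (fun n ↦ ∑ k ∈ range n, (log k)⁻¹) atTop atTop := by
  refine (not_summable_iff_tendsto_nat_atTop_of_nonneg fun k ↦ ?_).1 fun hs ↦ ?_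
  · exact inv_nonneg.2 (log_natCast_nonneg k)
  refine Real.not_summable_natCast_inv ((summable_nat_add_iff 2).1 ?_)
  refine ((summable_nat_add_iff 2).2 hs).of_nonneg_of_le (fun k ↦ by positivity) fun k ↦ ?_
  have hlog : 0 < log ((k + 2 : ℕ) : ℝ) := log_pos (by norm_cast; omega)
  exact inv_anti₀ hlog (log_le_self (by positivity))

theorem mul_log_add_one_sub_log_le_two {x : ℝ} (hx : 1 ≤ x) :
    (x + 1) * (log (x + 1) - log x) ≤ 2 :=
  calc (x + 1) * (log (x + 1) - log x)
      = (x + 1) * log ((x + 1) / x) := by rw [log_div (by positivity) (by positivity)]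
    _ ≤ (x + 1) * ((x + 1) / x - 1) := by gcongr; exact log_le_sub_one_of_pos (by positivity)
    _ ≤ 2 := by
      rw [div_sub_one (by positivity), mul_div_assoc', div_le_iff₀ (by positivity)]
      nlinarith

theorem tendsto_log_mul_sub_div_log :
    Tendsto (fun k : ℕ ↦ log k * ((k + 1) / log (k + 1) - k / log k)) atTop (𝓝 1) := by
  have hlog : Tendsto (fun k : ℕ ↦ log ((k : ℝ) + 1)) atTop atTop :=
    tendsto_log_atTop.comp (tendsto_atTop_add_const_right _ 1 tendsto_natCast_atTop_atTop)
  have hbound : ∀ᶠ k : ℕ in atTop,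
      0 ≤ (k + 1) * (log (k + 1) - log k) / log (k + 1) ∧
        (k + 1) * (log (k + 1) - log k) / log (k + 1) ≤ 2 / log ((k : ℝ) + 1) := by
    filter_upwards [eventually_ge_atTop 1] with k hk
    have hk' : (1 : ℝ) ≤ k := by exact_mod_cast hk
    have hpos : 0 < log ((k : ℝ) + 1) := log_pos (by linarith)
    have hmono : log k ≤ log ((k : ℝ) + 1) := log_le_log (by linarith) (by linarith)
    exact ⟨div_nonneg (mul_nonneg (by positivity) (sub_nonneg.2 hmono)) hpos.le,
      div_le_div_of_nonneg_right (mul_log_add_one_sub_log_le_two hk') hpos.le⟩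
  have hsmall := tendsto_of_tendsto_of_tendsto_of_le_of_le' tendsto_const_nhds
    (tendsto_const_nhds.div_atTop hlog) (hbound.mono fun _ h ↦ h.1) (hbound.mono fun _ h ↦ h.2)
  have hlim := (tendsto_const_nhds (x := (1 : ℝ))).sub hsmall
  rw [sub_zero] at hlim
  refine hlim.congr' ?_
  filter_upwards [eventually_ge_atTop 2] with k hk
  have hk' : (2 : ℝ) ≤ k := by exact_mod_cast hk
  have h1 : log ((k : ℝ) + 1) ≠ 0 := (log_pos (by linarith)).ne'
  have h2 : log (k : ℝ) ≠ 0 := (log_pos (by linarith)).ne'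
  generalize log ((k : ℝ) + 1) = L at h1 ⊢
  field_simp
  ring

theorem tendsto_log_div_mul_sum_range_inv_log :
    Tendsto (fun n : ℕ ↦ log n / n * ∑ k ∈ range n, (log k)⁻¹) atTop (𝓝 1) := by
  have h := tendsto_sum_range_div_sum_range (fun k ↦ inv_nonneg.2 (log_natCast_nonneg k))
    tendsto_sum_range_inv_log_atTop (isLittleO_sub_mul_inv_log tendsto_log_mul_sub_div_log)
  have htelescope (n : ℕ) : ∑ k ∈ range n, (((k : ℝ) + 1) / log (k + 1) - k / log k) =
      n / log n := by
    simpa using sum_range_sub (fun k : ℕ ↦ (k : ℝ) / log k) n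
  have h' := h.inv₀ one_ne_zero
  rw [inv_one] at h'
  refine h'.congr fun n ↦ ?_
  rw [htelescope, inv_div, div_div_eq_mul_div]
  ring

theorem tendsto_log_div_mul_sum_range {a : ℕ → ℝ} {C : ℝ}
    (ha : Tendsto (fun k : ℕ ↦ log k * a k) atTop (𝓝 C)) :
    Tendsto (fun n : ℕ ↦ log n / n * ∑ k ∈ range n, a k) atTop (𝓝 C) := by
  have h := (tendsto_sum_range_div_sum_range (fun k ↦ inv_nonneg.2 (log_natCast_nonneg k))
    tendsto_sum_range_inv_log_atTop (isLittleO_sub_mul_inv_log ha)).mul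
    tendsto_log_div_mul_sum_range_inv_log
  rw [mul_one] at h
  refine h.congr' ?_
  filter_upwards [tendsto_sum_range_inv_log_atTop.eventually_gt_atTop 0] with n hn
  generalize ∑ k ∈ range n, (log (k : ℝ))⁻¹ = S at hn ⊢
  field_simp

theorem tendsto_log_div_self_natCast :
    Tendsto (fun n : ℕ ↦ log n / n) atTop (𝓝 0) :=
  isLittleO_log_id_atTop.tendsto_div_nhds_zero.comp tendsto_natCast_atTop_atTop

theorem tendsto_log_div_mul_sum_Icc {a : ℕ → ℝ} {C : ℝ}
    (ha : Tendsto (fun k : ℕ ↦ log k * a k) atTop (𝓝 C)) :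
    Tendsto (fun n : ℕ ↦ log n / n * ∑ k ∈ Icc 2 n, a k) atTop (𝓝 C) := by
  have h := ((tendsto_log_div_mul_sum_range ha).add
    (ha.div_atTop tendsto_natCast_atTop_atTop)).sub
    (tendsto_log_div_self_natCast.mul_const (∑ k ∈ range 2, a k))
  rw [add_zero, zero_mul, sub_zero] at h
  refine h.congr' ?_
  filter_upwards [eventually_ge_atTop 1] with n hn
  rw [← Ico_add_one_right_eq_Icc, sum_Ico_eq_sub _ (by omega), sum_range_succ _ n]
  ring

theorem integral_const_rpow {u : ℝ} (hu : 0 < u) (hu1 : u ≠ 1) (a b : ℝ) :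
    ∫ x in a..b, u ^ x = (u ^ b - u ^ a) / log u := by
  have hlog : log u ≠ 0 := log_ne_zero_of_pos_of_ne_one hu hu1
  rw [intervalIntegral.integral_eq_sub_of_hasDerivAt (f := fun x ↦ u ^ x / log u)
    (fun x _ ↦ by simpa [hlog] using ((hasStrictDerivAt_const_rpow hu x).hasDerivAt.div_const
      (log u)))
    ((continuous_const_rpow hu.ne').intervalIntegrable a b), sub_div]

theorem integral_rpow_sub_sub_rpow_two_mul_sub {u v : ℝ} (hu : 0 < u) (hu1 : u ≠ 1)
    (hv : 0 < v) (hv1 : v ≠ 1) (A B a b : ℝ) :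
    ∫ t in a..b, (A * u ^ (t - a) - B * v ^ (2 * t - a)) =
      A * ((u ^ (b - a) - 1) / log u) - B * ((v ^ (2 * b - a) - v ^ a) / (2 * log v)) := by
  have hintegrable (w C p : ℝ) (hw : 0 < w) :
      IntervalIntegrable (fun t ↦ C * w ^ (p * t - a)) MeasureTheory.volume a b :=
    (continuous_const.mul ((continuous_const_rpow hw.ne').comp (by fun_prop))).intervalIntegrable
      a b
  rw [intervalIntegral.integral_sub (by simpa using hintegrable u A 1 hu) (hintegrable v B 2 hv),
    intervalIntegral.integral_const_mul, intervalIntegral.integral_const_mul,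
    intervalIntegral.integral_comp_sub_right (u ^ ·),
    intervalIntegral.integral_comp_mul_sub (v ^ ·) two_ne_zero,
    integral_const_rpow hu hu1, integral_const_rpow hv hv1, sub_self, rpow_zero, smul_eq_mul]
  ring

theorem tendsto_log_div_log_mul_rpow {d : ℕ → ℝ} {D r : ℝ} (hd : Tendsto d atTop (𝓝 D))
    (hD : D ≠ 0) (hr : r ≠ 0) :
    Tendsto (fun k : ℕ ↦ log k / log (d k * (k : ℝ) ^ r)) atTop (𝓝 r⁻¹) := by
  have hlog : Tendsto (fun k : ℕ ↦ log (d k) / log k) atTop (𝓝 0) :=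
    ((continuousAt_log hD).tendsto.comp hd).div_atTop
      (tendsto_log_atTop.comp tendsto_natCast_atTop_atTop)
  have h := (hlog.add_const r).inv₀ (by rwa [zero_add])
  rw [zero_add] at h
  refine h.congr' ?_
  filter_upwards [hd.eventually_ne hD, eventually_ge_atTop 2] with k hdk hk
  have hk' : (1 : ℝ) < k := by exact_mod_cast hk
  rw [log_mul hdk (rpow_pos_of_pos (by linarith) r).ne', log_rpow (by linarith)]
  have := (log_pos hk').ne'
  field_simp

theorem tendsto_mul_natCast_rpow_neg {d : ℕ → ℝ} {D s : ℝ} (hd : Tendsto d atTop (𝓝 D))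
    (hs : 0 < s) : Tendsto (fun k : ℕ ↦ d k * (k : ℝ) ^ (-s)) atTop (𝓝 0) := by
  simpa using hd.mul ((tendsto_rpow_neg_atTop hs).comp tendsto_natCast_atTop_atTop)

theorem eventually_pos_mul_natCast_rpow {d : ℕ → ℝ} {D : ℝ} (hd : Tendsto d atTop (𝓝 D))
    (hD : 0 < D) (r : ℝ) : ∀ᶠ k : ℕ in atTop, 0 < d k * (k : ℝ) ^ r := by
  filter_upwards [hd.eventually_const_lt hD, eventually_ge_atTop 1] with k hdk hk
  exact mul_pos hdk (rpow_pos_of_pos (by exact_mod_cast hk) r)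

theorem tendsto_log_mul_integral_rpow_sub_sub_rpow_two_mul_sub {u v : ℕ → ℝ} {A B a b : ℝ}
    (ha : 0 < a) (hab : a < b) (hu : Tendsto u atTop (𝓝 0)) (hv : Tendsto v atTop (𝓝 0))
    (hu_pos : ∀ᶠ k in atTop, 0 < u k) (hv_pos : ∀ᶠ k in atTop, 0 < v k)
    (hlogu : Tendsto (fun k : ℕ ↦ log k / log (u k)) atTop (𝓝 (-a)))
    (hlogv : Tendsto (fun k : ℕ ↦ log k / log (v k)) atTop (𝓝 (-b))) :
    Tendsto (fun k : ℕ ↦ log k * ∫ t in a..b, (A * u k ^ (t - a) - B * v k ^ (2 * t - a)))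
      atTop (𝓝 (A * a)) := by
  have hpow {w : ℕ → ℝ} (hw : Tendsto w atTop (𝓝 0)) {p : ℝ} (hp : 0 < p) :
      Tendsto (fun k ↦ w k ^ p) atTop (𝓝 0) := by
    simpa [zero_rpow hp.ne'] using hw.rpow_const (Or.inr hp.le)
  have h := ((((hpow hu (sub_pos.2 hab)).sub_const 1).const_mul A).mul hlogu).sub
    (((((hpow hv (by linarith : 0 < 2 * b - a)).sub (hpow hv ha)).const_mul B).mul
      hlogv).div_const 2)
  rw [show A * (0 - 1) * -a - B * (0 - 0) * -b / 2 = A * a by ring] at h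
  refine h.congr' ?_
  filter_upwards [hu_pos, hv_pos, hu.eventually_ne zero_ne_one, hv.eventually_ne zero_ne_one]
    with k hu₀ hv₀ hu₁ hv₁
  rw [integral_rpow_sub_sub_rpow_two_mul_sub hu₀ hu₁ hv₀ hv₁]
  ring

theorem uniform_expectation_asymptotics_general (α₀ α₁ : ℝ)
    (h0 : 0 < α₀) (h01 : α₀ < α₁)
    (c c' : ℕ → ℝ)
    (L L' : ℝ) (hL : 0 < L) (hL' : 0 < L')
    (hclim : Tendsto c atTop (nhds L)) (hc'lim : Tendsto c' atTop (nhds L'))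
    (E : ℕ → ℝ)
    (hE : ∀ k, 2 ≤ k → E k = (1 / (α₁ - α₀)) *
      ∫ t in α₀..α₁,
        (α₀ * 2 ^ α₀ * (2 * c k * (k : ℝ) ^ (-(1 / α₀))) ^ (t - α₀) -
          ((1 + α₀) / 2) * (α₀ * 2 ^ α₀) *
            (2 * c' k * (k : ℝ) ^ (-(1 / α₁))) ^ (2 * t - α₀))) :
    Tendsto (fun ℓ : ℕ => (Real.log ℓ / (ℓ : ℝ)) * ∑ k ∈ Finset.Icc 2 ℓ, E k)
      atTop (nhds (α₀ ^ 2 * 2 ^ α₀ / (α₁ - α₀))) := by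
  have hα₁ : 0 < α₁ := h0.trans h01
  have hd := hclim.const_mul 2
  have hd' := hc'lim.const_mul 2
  have hlogu := tendsto_log_div_log_mul_rpow (r := -(1 / α₀)) hd (by positivity)
    (neg_ne_zero.2 (by positivity))
  have hlogv := tendsto_log_div_log_mul_rpow (r := -(1 / α₁)) hd' (by positivity)
    (neg_ne_zero.2 (by positivity))
  rw [inv_neg, one_div, inv_inv] at hlogu hlogv
  have key := (tendsto_log_mul_integral_rpow_sub_sub_rpow_two_mul_sub
    (A := α₀ * 2 ^ α₀) (B := (1 + α₀) / 2 * (α₀ * 2 ^ α₀)) h0 h01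
    (tendsto_mul_natCast_rpow_neg hd (by positivity))
    (tendsto_mul_natCast_rpow_neg hd' (by positivity))
    (eventually_pos_mul_natCast_rpow hd (by positivity) _)
    (eventually_pos_mul_natCast_rpow hd' (by positivity) _) hlogu hlogv).const_mul (1 / (α₁ - α₀))
  rw [show 1 / (α₁ - α₀) * (α₀ * 2 ^ α₀ * α₀) = α₀ ^ 2 * 2 ^ α₀ / (α₁ - α₀) by ring] at key
  refine tendsto_log_div_mul_sum_Icc (key.congr' ?_)
  filter_upwards [eventually_ge_atTop 2] with k hk
  rw [hE k hk]
  ring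

/-- Asymptotics of expectations for the uniform distribution on `[α₀, α₁]`: with
`E k = (1/(α₁-α₀)) ∫_{α₀}^{α₁} [α₀ 2^α₀ (2 c_k k^{-1/α₀})^{t-α₀}
  - ((1+α₀)/2) α₀ 2^α₀ (2 c'_k k^{-1/α₁})^{2t-α₀}] dt`,
one has `((log ℓ)/ℓ) ∑_{k=2}^ℓ E k → α₀² 2^α₀ / (α₁ - α₀)`. -/
theorem uniform_expectation_asymptotics (α₀ α₁ : ℝ)
    (h0 : 0 < α₀) (h01 : α₀ < α₁) (h1 : α₁ < 1)
    (c c' : ℕ → ℝ) (hc : ∀ k, 2 ≤ k → 0 < c k) (hc' : ∀ k, 2 ≤ k → 0 < c' k)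
    (L L' : ℝ) (hL : 0 < L) (hL' : 0 < L')
    (hclim : Tendsto c atTop (nhds L)) (hc'lim : Tendsto c' atTop (nhds L'))
    (E : ℕ → ℝ)
    (hE : ∀ k, 2 ≤ k → E k = (1 / (α₁ - α₀)) *
      ∫ t in α₀..α₁,
        (α₀ * 2 ^ α₀ * (2 * c k * (k : ℝ) ^ (-(1 / α₀))) ^ (t - α₀) -
          ((1 + α₀) / 2) * (α₀ * 2 ^ α₀) *
            (2 * c' k * (k : ℝ) ^ (-(1 / α₁))) ^ (2 * t - α₀))) :
    Tendsto (fun ℓ : ℕ => (Real.log ℓ / (ℓ : ℝ)) * ∑ k ∈ Finset.Icc 2 ℓ, E k)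
      atTop (nhds (α₀ ^ 2 * 2 ^ α₀ / (α₁ - α₀))) :=
  uniform_expectation_asymptotics_general α₀ α₁ h0 h01 c c' L L' hL hL' hclim hc'lim E hE
end
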